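/- Let A_i and A_j be affine subspaces of V with directions V_i = A_i − A_i and V_j = A_j − A_j, and let X₀ ∈ A_i ∩ A_j with X₀ ≠ 0. Suppose that the set ∪_{p,q ∈ {i,j}} (A_p + V_q) is transverse to the orbits of H. Then every S ∈ V_i + V_j satisfying X₀ᵀS + SᵀX₀ = 0 (i.e., (X₀)_ℓᵀ S_ℓ + S_ℓᵀ (X₀)_ℓ = 0 for every ℓ = 1,…,L) must be S = 0. Consequently, there exists c > 0 such that ‖X₀ᵀS + SᵀX₀‖ ≥ c for all S ∈ V_i + V_j with ‖S‖ = 1. -/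

import Mathlib

open scoped BigOperators
open Matrix

namespace GPR

variable {L : ℕ} {N R : Fin L → ℕ}

/-- The signal space: `L`-tuples of real `N ℓ × R ℓ` matrices. -/
abbrev V (N R : Fin L → ℕ) := ∀ ℓ : Fin L, Matrix (Fin (N ℓ)) (Fin (R ℓ)) ℝ

/-- Frobenius norm of a tuple of matrices: `(Σ_ℓ Σ_{i,j} (X_ℓ)_{ij}²)^{1/2}`. -/
noncomputable def fnorm {m n : Fin L → ℕ} (X : ∀ ℓ : Fin L, Matrix (Fin (m ℓ)) (Fin (n ℓ)) ℝ) : ℝ :=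
  Real.sqrt (∑ ℓ, ∑ i, ∑ j, (X ℓ i j) ^ 2)

/-- The group `H = ∏_ℓ O(N ℓ)`, as tuples of orthogonal matrices. -/
abbrev HGroup (N : Fin L → ℕ) := ∀ ℓ : Fin L, Matrix.orthogonalGroup (Fin (N ℓ)) ℝ

/-- The action of `H` on `V`: `(Q · X)_ℓ = Q_ℓ X_ℓ`. -/
def act (Q : HGroup N) (X : V N R) : V N R :=
  fun ℓ => (Q ℓ : Matrix (Fin (N ℓ)) (Fin (N ℓ)) ℝ) * X ℓ

/-- `d_σ(X,Y) = min(‖X−Y‖, ‖X+Y‖)`. -/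
noncomputable def dSigma (X Y : V N R) : ℝ := min (fnorm (X - Y)) (fnorm (X + Y))

/-- `d_H(X,Y) = min_{Q ∈ H} ‖X − Q·Y‖`. -/
noncomputable def dH (X Y : V N R) : ℝ := ⨅ Q : HGroup N, fnorm (X - act Q Y)

/-- The positive semidefinite square root `√(XᵀX)` of the Gram matrix of a single matrix. -/
noncomputable def gramSqrt {n d : ℕ} (X : Matrix (Fin n) (Fin d) ℝ) : Matrix (Fin d) (Fin d) ℝ :=
  (Matrix.posSemidef_conjTranspose_mul_self X).isHermitian.eigenvectorUnitary.1 *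
    Matrix.diagonal ((↑) ∘ (√·) ∘ (Matrix.posSemidef_conjTranspose_mul_self X).isHermitian.eigenvalues) *
    (star (Matrix.posSemidef_conjTranspose_mul_self X).isHermitian.eigenvectorUnitary : Matrix (Fin d) (Fin d) ℝ)

/-- The tuple `√(XᵀX) = (√(X₁ᵀX₁), …, √(X_LᵀX_L))`. -/
noncomputable def sqrtGram (X : V N R) : ∀ ℓ : Fin L, Matrix (Fin (R ℓ)) (Fin (R ℓ)) ℝ :=
  fun ℓ => gramSqrt (X ℓ)

/-- The second moment: tuple of Gram matrices `XᵀX = (X₁ᵀX₁, …, X_LᵀX_L)`. -/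
def gram (X : V N R) : ∀ ℓ : Fin L, Matrix (Fin (R ℓ)) (Fin (R ℓ)) ℝ :=
  fun ℓ => (X ℓ)ᵀ * X ℓ

/-- A set `S ⊆ V` is transverse to the orbits of `H` if whenever `X ∈ S` and `Q·X ∈ S`,
one has `Q·X = X` or `Q·X = −X`. -/
def Transverse (S : Set (V N R)) : Prop :=
  ∀ X ∈ S, ∀ Q : HGroup N, act Q X ∈ S → act Q X = X ∨ act Q X = -X

end GPR

/-!
If `X₀ᵀS + SᵀX₀ = 0`, then `X₀ + S` and `X₀ - S` have the same Gram matrices, and two real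
matrices with the same Gram matrix differ by an orthogonal factor on the left; so some `Q ∈ H`
maps `X₀ - S` to `X₀ + S`. Both points lie in `A_i + V_j`, so transversality forces
`X₀ + S = ±(X₀ - S)`, that is `S = 0` or `X₀ = 0`. The uniform lower bound follows by minimizing
the continuous function `‖X₀ᵀS + SᵀX₀‖` over the compact unit sphere of `V_i + V_j`.
-/

open scoped InnerProductSpace in
theorem LinearIsometryEquiv.exists_apply_eq_of_norm_map_eq {𝕜 E F : Type*} [RCLike 𝕜]
    [NormedAddCommGroup E] [InnerProductSpace 𝕜 E] [FiniteDimensional 𝕜 E]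
    [AddCommGroup F] [Module 𝕜 F] (a b : F →ₗ[𝕜] E) (h : ∀ x, ‖a x‖ = ‖b x‖) :
    ∃ e : E ≃ₗᵢ[𝕜] E, ∀ x, e (b x) = a x := by
  have hker : LinearMap.ker b ≤ LinearMap.ker a := fun x hx => by
    rw [LinearMap.mem_ker, ← norm_eq_zero, h, norm_eq_zero]
    exact hx
  let φ : LinearMap.range b →ₗ[𝕜] E :=
    (LinearMap.ker b).liftQ a hker ∘ₗ b.quotKerEquivRange.symm.toLinearMap
  have hφ : ∀ x, φ ⟨b x, LinearMap.mem_range_self b x⟩ = a x := fun x => by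
    simp [φ, LinearMap.quotKerEquivRange_symm_apply_image]
  let ψ : LinearMap.range b →ₗᵢ[𝕜] E :=
    { φ with
      norm_map' := by
        rintro ⟨_, x, rfl⟩
        exact (congrArg norm (hφ x)).trans (h x) }
  refine ⟨ψ.extend.toLinearIsometryEquiv rfl, fun x => ?_⟩
  exact (ψ.extend_apply ⟨b x, LinearMap.mem_range_self b x⟩).trans (hφ x)

open scoped InnerProductSpace in
theorem Matrix.exists_mem_unitaryGroup_mul_eq_of_conjTranspose_mul_self_eq
    {𝕜 m n : Type*} [RCLike 𝕜] [Fintype m] [DecidableEq m] [Fintype n] [DecidableEq n]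
    {A B : Matrix m n 𝕜} (h : Aᴴ * A = Bᴴ * B) :
    ∃ Q ∈ unitaryGroup m 𝕜, Q * B = A := by
  have inner_self_eq (M : Matrix m n 𝕜) (x : EuclideanSpace 𝕜 n) :
      ⟪M.toEuclideanLin x, M.toEuclideanLin x⟫_𝕜 = ⟪x, (Mᴴ * M).toEuclideanLin x⟫_𝕜 := by
    rw [toLpLin_mul_same, LinearMap.comp_apply, toEuclideanLin_conjTranspose_eq_adjoint,
      LinearMap.adjoint_inner_right]
  obtain ⟨e, he⟩ := LinearIsometryEquiv.exists_apply_eq_of_norm_map_eq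
    A.toEuclideanLin B.toEuclideanLin fun x => by
      rw [norm_eq_sqrt_re_inner (𝕜 := 𝕜), norm_eq_sqrt_re_inner (𝕜 := 𝕜), inner_self_eq,
        inner_self_eq, h]
  refine ⟨(toEuclideanCLM (𝕜 := 𝕜) (n := m)).symm
    (e : EuclideanSpace 𝕜 m →L[𝕜] EuclideanSpace 𝕜 m),
    Unitary.map_mem _ (Unitary.linearIsometryEquiv.symm e).property, ?_⟩
  apply toEuclideanLin.injective
  ext1 x
  rw [toLpLin_mul_same, LinearMap.comp_apply, ← coe_toEuclideanCLM_eq_toEuclideanLin,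
    StarAlgEquiv.apply_symm_apply]
  exact he x

theorem AffineSubspace.exists_add_eq_of_mem_sup_direction {k M : Type*} [Ring k]
    [AddCommGroup M] [Module k M] {A A' : AffineSubspace k M} {x s : M} (hx : x ∈ A)
    (hs : s ∈ A.direction ⊔ A'.direction) : ∃ a ∈ A, ∃ v ∈ A'.direction, x + s = a + v := by
  obtain ⟨u, hu, v, hv, rfl⟩ := Submodule.mem_sup.mp hs
  refine ⟨u +ᵥ x, vadd_mem_of_mem_direction hu hx, v, hv, ?_⟩
  rw [vadd_eq_add, add_comm u x, add_assoc]

namespace GPR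

section fnorm

variable {L : ℕ} {m n : Fin L → ℕ}

lemma fnorm_eq_zero {X : ∀ ℓ : Fin L, Matrix (Fin (m ℓ)) (Fin (n ℓ)) ℝ} :
    fnorm X = 0 ↔ X = 0 := by
  rw [fnorm, Real.sqrt_eq_zero (by positivity)]
  simp (disch := intros; positivity) only [Finset.sum_eq_zero_iff_of_nonneg, Finset.mem_univ,
    true_imp_iff, pow_eq_zero_iff two_ne_zero, funext_iff, ← Matrix.ext_iff, Pi.zero_apply,
    Matrix.zero_apply]

lemma fnorm_pos {X : ∀ ℓ : Fin L, Matrix (Fin (m ℓ)) (Fin (n ℓ)) ℝ} : 0 < fnorm X ↔ X ≠ 0 :=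
  (Real.sqrt_nonneg _).lt_iff_ne'.trans fnorm_eq_zero.not

lemma abs_le_fnorm (X : ∀ ℓ : Fin L, Matrix (Fin (m ℓ)) (Fin (n ℓ)) ℝ) (ℓ : Fin L)
    (i : Fin (m ℓ)) (j : Fin (n ℓ)) : |X ℓ i j| ≤ fnorm X := by
  rw [fnorm, ← Real.sqrt_sq_eq_abs]
  gcongr
  calc X ℓ i j ^ 2 ≤ ∑ j', X ℓ i j' ^ 2 :=
        Finset.single_le_sum (fun _ _ => sq_nonneg _) (Finset.mem_univ j)
    _ ≤ ∑ i', ∑ j', X ℓ i' j' ^ 2 :=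
        Finset.single_le_sum (f := fun i' => ∑ j', X ℓ i' j' ^ 2)
          (fun _ _ => by positivity) (Finset.mem_univ i)
    _ ≤ ∑ ℓ', ∑ i', ∑ j', X ℓ' i' j' ^ 2 :=
        Finset.single_le_sum (f := fun ℓ' => ∑ i', ∑ j', X ℓ' i' j' ^ 2)
          (fun _ _ => by positivity) (Finset.mem_univ ℓ)

@[fun_prop]
lemma continuous_fnorm :
    Continuous (fnorm : (∀ ℓ : Fin L, Matrix (Fin (m ℓ)) (Fin (n ℓ)) ℝ) → ℝ) := by
  unfold fnorm
  fun_prop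

lemma isCompact_fnorm_eq_one :
    IsCompact {X : ∀ ℓ : Fin L, Matrix (Fin (m ℓ)) (Fin (n ℓ)) ℝ | fnorm X = 1} := by
  refine (isCompact_univ_pi fun ℓ => isCompact_univ_pi fun i => isCompact_univ_pi fun j =>
    isCompact_Icc (a := (-1 : ℝ)) (b := 1)).of_isClosed_subset
    (isClosed_singleton.preimage continuous_fnorm) fun X hX ℓ _ i _ j _ => ?_
  exact abs_le.mp (hX ▸ abs_le_fnorm X ℓ i j)

end fnorm

variable {L : ℕ} {N R : Fin L → ℕ}

lemma exists_act_eq_of_gram_eq {X Y : V N R} (h : gram X = gram Y) :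
    ∃ Q : HGroup N, act Q Y = X := by
  have hℓ (ℓ : Fin L) : (X ℓ)ᴴ * X ℓ = (Y ℓ)ᴴ * Y ℓ := by
    simpa only [gram, conjTranspose_eq_transpose_of_trivial] using congrFun h ℓ
  choose Q hQ using fun ℓ =>
    Matrix.exists_mem_unitaryGroup_mul_eq_of_conjTranspose_mul_self_eq (hℓ ℓ)
  exact ⟨fun ℓ => ⟨Q ℓ, (hQ ℓ).1⟩, funext fun ℓ => (hQ ℓ).2⟩

lemma gram_add_eq_gram_sub {X S : V N R} (h : ∀ ℓ, (X ℓ)ᵀ * S ℓ + (S ℓ)ᵀ * X ℓ = 0) :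
    gram (X + S) = gram (X - S) := by
  funext ℓ
  simp only [gram, Pi.add_apply, Pi.sub_apply, transpose_add, transpose_sub, Matrix.add_mul,
    Matrix.mul_add, Matrix.sub_mul, Matrix.mul_sub, eq_neg_of_add_eq_zero_left (h ℓ)]
  abel

lemma Transverse.eq_zero_of_gram_add_eq_gram_sub {T : Set (V N R)} (hT : Transverse T)
    {X S : V N R} (hX : X ≠ 0) (hadd : X + S ∈ T) (hsub : X - S ∈ T)
    (hgram : gram (X + S) = gram (X - S)) : S = 0 := by
  -- instance search does not unfold `Matrix` to find the torsion-freeness of the `Pi` type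
  have := IsAddTorsionFree.of_isTorsionFree ℝ (V N R)
  obtain ⟨Q, hQ⟩ := exists_act_eq_of_gram_eq hgram
  rcases hT _ hsub Q (hQ ▸ hadd) with h | h <;> rw [hQ] at h
  · rwa [sub_eq_add_neg, add_right_inj, self_eq_neg] at h
  · rw [neg_sub, add_comm, sub_eq_add_neg, add_right_inj, self_eq_neg] at h
    exact absurd h hX

theorem skew_deviation_pos_on_tangent_general
    (L : ℕ) (N R : Fin L → ℕ)
    (Ai Aj : AffineSubspace ℝ (V N R))
    (X₀ : V N R) (hX₀i : X₀ ∈ (Ai : Set (V N R)))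
    (hX₀ : X₀ ≠ 0)
    (htrans : Transverse (
      {x : V N R | ∃ a ∈ (Ai : Set (V N R)), ∃ v ∈ Ai.direction, x = a + v} ∪
      {x : V N R | ∃ a ∈ (Ai : Set (V N R)), ∃ v ∈ Aj.direction, x = a + v} ∪
      {x : V N R | ∃ a ∈ (Aj : Set (V N R)), ∃ v ∈ Ai.direction, x = a + v} ∪
      {x : V N R | ∃ a ∈ (Aj : Set (V N R)), ∃ v ∈ Aj.direction, x = a + v})) :
    (∀ S ∈ (Ai.direction ⊔ Aj.direction : Submodule ℝ (V N R)),
      (∀ ℓ, (X₀ ℓ)ᵀ * S ℓ + (S ℓ)ᵀ * X₀ ℓ = 0) → S = 0) ∧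
    (∃ c : ℝ, 0 < c ∧ ∀ S ∈ (Ai.direction ⊔ Aj.direction : Submodule ℝ (V N R)),
      fnorm S = 1 → c ≤ fnorm (fun ℓ => (X₀ ℓ)ᵀ * S ℓ + (S ℓ)ᵀ * X₀ ℓ)) := by
  set W := Ai.direction ⊔ Aj.direction
  have rigid : ∀ S ∈ W, (∀ ℓ, (X₀ ℓ)ᵀ * S ℓ + (S ℓ)ᵀ * X₀ ℓ = 0) → S = 0 := by
    intro S hS hskew
    refine htrans.eq_zero_of_gram_add_eq_gram_sub hX₀ ?_ ?_ (gram_add_eq_gram_sub hskew)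
    · exact .inl <| .inl <| .inr <| AffineSubspace.exists_add_eq_of_mem_sup_direction hX₀i hS
    · rw [sub_eq_add_neg]
      exact .inl <| .inl <| .inr <|
        AffineSubspace.exists_add_eq_of_mem_sup_direction hX₀i (neg_mem hS)
  have hK : IsCompact ((W : Set (V N R)) ∩ {S | fnorm S = 1}) :=
    isCompact_fnorm_eq_one.inter_left W.closed_of_finiteDimensional
  have pos : ∀ S ∈ (W : Set (V N R)) ∩ {S | fnorm S = 1},
      0 < fnorm (fun ℓ => (X₀ ℓ)ᵀ * S ℓ + (S ℓ)ᵀ * X₀ ℓ) := by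
    rintro S ⟨hSW, hS1 : fnorm S = 1⟩
    refine fnorm_pos.mpr fun h0 => ?_
    rw [rigid S hSW (congrFun h0), fnorm_eq_zero.mpr rfl] at hS1
    exact zero_ne_one hS1
  obtain ⟨c, hc, hle⟩ := hK.exists_forall_le' (by fun_prop) pos
  exact ⟨rigid, c, hc, fun S hS hS1 => hle S ⟨hS, hS1⟩⟩

/-- If `X₀ ≠ 0` lies in `A i ∩ A j` and `∪_{p,q ∈ {i,j}} (A p + V q)` is
transverse to the orbits of `H`, then the only `S ∈ V i + V j` with `X₀ᵀS + SᵀX₀ = 0` is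
`S = 0`; consequently `‖X₀ᵀS + SᵀX₀‖` is bounded below away from `0` on the unit sphere of
`V i + V j`. -/
theorem skew_deviation_pos_on_tangent
    (L : ℕ) (hL : 0 < L) (N R : Fin L → ℕ) (hN : ∀ ℓ, 0 < N ℓ) (hR : ∀ ℓ, 0 < R ℓ)
    (Ai Aj : AffineSubspace ℝ (V N R))
    (X₀ : V N R) (hX₀i : X₀ ∈ (Ai : Set (V N R))) (hX₀j : X₀ ∈ (Aj : Set (V N R)))
    (hX₀ : X₀ ≠ 0)
    (htrans : Transverse (
      {x : V N R | ∃ a ∈ (Ai : Set (V N R)), ∃ v ∈ Ai.direction, x = a + v} ∪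
      {x : V N R | ∃ a ∈ (Ai : Set (V N R)), ∃ v ∈ Aj.direction, x = a + v} ∪
      {x : V N R | ∃ a ∈ (Aj : Set (V N R)), ∃ v ∈ Ai.direction, x = a + v} ∪
      {x : V N R | ∃ a ∈ (Aj : Set (V N R)), ∃ v ∈ Aj.direction, x = a + v})) :
    (∀ S ∈ (Ai.direction ⊔ Aj.direction : Submodule ℝ (V N R)),
      (∀ ℓ, (X₀ ℓ)ᵀ * S ℓ + (S ℓ)ᵀ * X₀ ℓ = 0) → S = 0) ∧
    (∃ c : ℝ, 0 < c ∧ ∀ S ∈ (Ai.direction ⊔ Aj.direction : Submodule ℝ (V N R)),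
      fnorm S = 1 → c ≤ fnorm (fun ℓ => (X₀ ℓ)ᵀ * S ℓ + (S ℓ)ᵀ * X₀ ℓ)) :=
  skew_deviation_pos_on_tangent_general L N R Ai Aj X₀ hX₀i hX₀ htrans

end GPR
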